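/- arXiv:1604.08573 — 3 statements merged into one kernel-verified Lean document; each statement's English description precedes it below -/
import Mathlib

section
/- For every n ≥ 1 and every nondecreasing initial vector ρ0 ∈ ℝ^n (i.e. ρ0_1 ≤ ρ0_2 ≤ ⋯ ≤ ρ0_n), the closure of the convex hull of the attainable set A(ρ0, E_P) for the path graph P_n equals the convex hull of the finite set {S_A : A ⊆ {1,…,n−1}} of 2^{n−1} points. -/
/-!
Let `K` be the set of nondecreasing vectors majorized by `ρ0`: their partial sums dominate those
of `ρ0`, with equal totals. Averaging two neighbours keeps a vector in `K`, and `K` is compact and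
convex, so it contains the closed convex hull of the attainable set. At an extreme point `x` of
`K`, wherever the partial sums of `x` and `ρ0` differ, `x` is flat: otherwise shifting mass
between the two stretches that reach out to the nearest indices where the partial sums agree
moves `x` in both directions inside `K`. Hence every extreme point is some `S_A`, and by
Krein–Milman `K` lies in the convex hull of the `S_A`.

Conversely, `S_A` is a limit of attainable points: on the compact closure of what is attainable
with the edges inside the blocks of `A` alone, a minimiser of `∑ ρₖ²` is constant on the blocks,
as averaging two unequal entries lowers this sum, while the sums over the blocks never change.
-/

/-- The averaging operator `B_{ij}` : averages the populations at vertices `i` and `j`,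
leaving the other components unchanged. -/
noncomputable def avg {n : ℕ} (i j : Fin n) (ρ : Fin n → ℝ) : Fin n → ℝ :=
  fun k => if k = i ∨ k = j then (ρ i + ρ j) / 2 else ρ k

/-- The attainable set `A(ρ0, E)`: all vectors obtained from `ρ0` by applying a finite
sequence of operators `B_{ij}` with `{i,j} ∈ E` (and `i ≠ j`). -/
def attainable (n : ℕ) (E : Set (Sym2 (Fin n))) (ρ0 : Fin n → ℝ) : Set (Fin n → ℝ) :=
  {ρ | ∃ L : List (Fin n × Fin n),
    (∀ p ∈ L, p.1 ≠ p.2 ∧ s(p.1, p.2) ∈ E) ∧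
    ρ = L.foldl (fun σ p => avg p.1 p.2 σ) ρ0}

/-- The edge set of the path graph `P_n` (0-based: edges `{i, i+1}` for `i+1 < n`). -/
def pathEdges (n : ℕ) : Set (Sym2 (Fin n)) :=
  {e | ∃ i : ℕ, ∃ h : i + 1 < n, e = s(⟨i, Nat.lt_of_succ_lt h⟩, ⟨i + 1, h⟩)}

/-- Start of the block of index `j` determined by `A` (0-based: `i ∈ A` means indices
`i` and `i+1` lie in the same block): the least `a` with `[a, j) ⊆ A`. -/
def blockStart (A : Finset ℕ) (j : ℕ) : ℕ :=
  Nat.findGreatest (fun a => a ≠ 0 ∧ (a - 1) ∉ A) j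

/-- End of the block of index `j` determined by `A`: the greatest `b ≤ n - 1`
with `[j, b) ⊆ A`. -/
def blockEnd (n : ℕ) (A : Finset ℕ) (j : ℕ) : ℕ :=
  Nat.findGreatest (fun b => ∀ m ∈ Finset.Ico j b, m ∈ A) (n - 1)

/-- The point `S_A`: on each block of consecutive indices determined by `A`, its
components all equal the average of the components of `ρ0` over that block. -/
noncomputable def SA {n : ℕ} (ρ0 : Fin n → ℝ) (A : Finset ℕ) : Fin n → ℝ :=
  fun j =>
    (∑ m ∈ Finset.Icc (blockStart A (j : ℕ)) (blockEnd n A (j : ℕ)),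
        if h : m < n then ρ0 ⟨m, h⟩ else 0) /
      ((blockEnd n A (j : ℕ) - blockStart A (j : ℕ) + 1 : ℕ) : ℝ)

/-- Apply the adjacent averaging operator `B_{p,p+1}` (0-based) if it exists. -/
noncomputable def stepAt (n : ℕ) (p : ℕ) (ρ : Fin n → ℝ) : Fin n → ℝ :=
  if h : p + 1 < n then avg ⟨p, Nat.lt_of_succ_lt h⟩ ⟨p + 1, h⟩ ρ else ρ

open Filter Topology

section Averaging

variable {n : ℕ}

lemma avg_comm (i j : Fin n) : avg i j = avg j i := by
  funext ρ k
  simp only [avg, or_comm, add_comm]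

lemma avg_apply_left (i j : Fin n) (ρ : Fin n → ℝ) : avg i j ρ i = (ρ i + ρ j) / 2 := by
  simp [avg]

lemma continuous_avg (i j : Fin n) : Continuous (avg i j) := by
  refine continuous_pi fun k => ?_
  simp only [avg]
  split_ifs
  · fun_prop
  · exact continuous_apply k

lemma avg_eq_of_sym2_eq {i j k l : Fin n} (h : s(i, j) = s(k, l)) : avg i j = avg k l := by
  rcases Sym2.eq_iff.1 h with ⟨rfl, rfl⟩ | ⟨rfl, rfl⟩
  · rfl
  · exact avg_comm _ _

lemma sum_comp_avg (g : ℝ → ℝ) (i j : Fin n) (s : Finset (Fin n)) (ρ : Fin n → ℝ) :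
    ∑ k ∈ s, g (avg i j ρ k) =
      ∑ k ∈ s, g (ρ k) + ∑ k ∈ s ∩ {i, j}, (g ((ρ i + ρ j) / 2) - g (ρ k)) := by
  rw [← Finset.sum_ite_mem, ← Finset.sum_add_distrib]
  refine Finset.sum_congr rfl fun k _ => ?_
  by_cases hk : k = i ∨ k = j <;> simp [avg, hk]

lemma sum_avg_of_mem_iff {i j : Fin n} {s : Finset (Fin n)} (h : i ∈ s ↔ j ∈ s)
    (ρ : Fin n → ℝ) : ∑ k ∈ s, avg i j ρ k = ∑ k ∈ s, ρ k := by
  have := sum_comp_avg id i j s ρ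
  simp only [id] at this
  rw [this, add_eq_left]
  by_cases hi : i ∈ s
  · rw [Finset.inter_eq_right.2 (by simp [Finset.insert_subset_iff, hi, h.1 hi])]
    rcases eq_or_ne i j with rfl | hij
    · simp
    · rw [Finset.sum_pair hij]; ring
  · rw [Finset.disjoint_iff_inter_eq_empty.1 (by simp [hi, ← h]), Finset.sum_empty]

lemma sum_sq_avg {i j : Fin n} (hij : i ≠ j) (ρ : Fin n → ℝ) :
    ∑ k, avg i j ρ k ^ 2 = ∑ k, ρ k ^ 2 - (ρ i - ρ j) ^ 2 / 2 := by
  rw [sum_comp_avg (· ^ 2), Finset.univ_inter, Finset.sum_pair hij]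
  ring

end Averaging

section Attainable

variable {n : ℕ} {E : Set (Sym2 (Fin n))} {ρ0 : Fin n → ℝ}

lemma attainable_mono {E' : Set (Sym2 (Fin n))} (h : E ⊆ E') :
    attainable n E ρ0 ⊆ attainable n E' ρ0 := by
  rintro ρ ⟨L, hL, rfl⟩
  exact ⟨L, fun p hp => ⟨(hL p hp).1, h (hL p hp).2⟩, rfl⟩

lemma avg_mem_attainable {i j : Fin n} (hij : i ≠ j) (he : s(i, j) ∈ E) {ρ : Fin n → ℝ}
    (hρ : ρ ∈ attainable n E ρ0) : avg i j ρ ∈ attainable n E ρ0 := by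
  obtain ⟨L, hL, rfl⟩ := hρ
  refine ⟨L ++ [(i, j)], fun p hp => ?_, by simp⟩
  rcases List.mem_append.1 hp with hp | hp
  · exact hL p hp
  · rw [List.mem_singleton.1 hp]; exact ⟨hij, he⟩

lemma attainable_subset {S : Set (Fin n → ℝ)} (h0 : ρ0 ∈ S)
    (hS : ∀ i j, i ≠ j → s(i, j) ∈ E → Set.MapsTo (avg i j) S S) :
    attainable n E ρ0 ⊆ S := by
  rintro ρ ⟨L, hL, rfl⟩
  induction L generalizing ρ0 with
  | nil => exact h0
  | cons q L ih =>
    exact ih (hS _ _ (hL q List.mem_cons_self).1 (hL q List.mem_cons_self).2 h0)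
      fun p hp => hL p (List.mem_cons_of_mem _ hp)

lemma mapsTo_avg_closure_attainable {i j : Fin n} (hij : i ≠ j) (he : s(i, j) ∈ E) :
    Set.MapsTo (avg i j) (closure (attainable n E ρ0)) (closure (attainable n E ρ0)) :=
  Set.MapsTo.closure (fun _ hρ => avg_mem_attainable hij he hρ) (continuous_avg i j)

lemma apply_eq_of_mem_closure_attainable {g : (Fin n → ℝ) → ℝ} (hg : Continuous g)
    (hinv : ∀ i j, i ≠ j → s(i, j) ∈ E → ∀ ρ, g (avg i j ρ) = g ρ) {ρ : Fin n → ℝ}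
    (hρ : ρ ∈ closure (attainable n E ρ0)) : g ρ = g ρ0 := by
  refine closure_minimal (attainable_subset (S := {ρ | g ρ = g ρ0}) rfl ?_)
    (isClosed_eq hg continuous_const) hρ
  exact fun i j hij he ρ hρ => (hinv i j hij he ρ).trans hρ

lemma norm_avg_le (i j : Fin n) (ρ : Fin n → ℝ) : ‖avg i j ρ‖ ≤ ‖ρ‖ := by
  refine (pi_norm_le_iff_of_nonneg (norm_nonneg ρ)).2 fun k => ?_
  have hi := norm_le_pi_norm ρ i
  have hj := norm_le_pi_norm ρ j
  simp only [avg]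
  split_ifs
  · rw [Real.norm_eq_abs] at hi hj ⊢
    rw [abs_le] at hi hj ⊢
    constructor <;> linarith [hi.1, hi.2, hj.1, hj.2]
  · exact norm_le_pi_norm ρ k

lemma isCompact_closure_attainable : IsCompact (closure (attainable n E ρ0)) := by
  refine (isCompact_closedBall 0 ‖ρ0‖).of_isClosed_subset isClosed_closure
    (closure_minimal (attainable_subset (by simp) fun i j _ _ ρ hρ => ?_)
      Metric.isClosed_closedBall)
  simpa using (norm_avg_le i j ρ).trans (by simpa using hρ)

theorem exists_mem_closure_attainable_forall_edge_eq (E : Set (Sym2 (Fin n)))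
    (ρ0 : Fin n → ℝ) :
    ∃ y ∈ closure (attainable n E ρ0), ∀ i j, i ≠ j → s(i, j) ∈ E → y i = y j := by
  obtain ⟨y, hy, hmin⟩ := isCompact_closure_attainable.exists_isMinOn
    ⟨ρ0, subset_closure ⟨[], by simp, rfl⟩⟩ (f := fun ρ : Fin n → ℝ => ∑ k, ρ k ^ 2)
    (by fun_prop)
  refine ⟨y, hy, fun i j hij he => ?_⟩
  have hle : ∑ k, y k ^ 2 ≤ ∑ k, avg i j y k ^ 2 :=
    hmin (mapsTo_avg_closure_attainable hij he hy)
  rw [sum_sq_avg hij] at hle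
  nlinarith [sq_nonneg (y i - y j)]

end Attainable

section PartialSums

variable {n : ℕ}

def entry (x : Fin n → ℝ) (m : ℕ) : ℝ := if h : m < n then x ⟨m, h⟩ else 0

def partialSum (x : Fin n → ℝ) (m : ℕ) : ℝ :=
  ∑ k ∈ Finset.univ.filter (fun k : Fin n => (k : ℕ) < m), x k

lemma entry_of_lt (x : Fin n → ℝ) {m : ℕ} (h : m < n) : entry x m = x ⟨m, h⟩ := dif_pos h

@[simp] lemma partialSum_zero (x : Fin n → ℝ) : partialSum x 0 = 0 := by
  simp [partialSum]

lemma partialSum_succ (x : Fin n → ℝ) (m : ℕ) :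
    partialSum x (m + 1) = partialSum x m + entry x m := by
  unfold partialSum entry
  split_ifs with h
  · have hins : Finset.univ.filter (fun k : Fin n => (k : ℕ) < m + 1) =
        insert ⟨m, h⟩ (Finset.univ.filter (fun k : Fin n => (k : ℕ) < m)) := by
      ext k
      simp only [Finset.mem_filter, Finset.mem_univ, true_and, Finset.mem_insert, Fin.ext_iff]
      omega
    rw [hins, Finset.sum_insert (by simp), add_comm]
  · rw [add_zero]
    congr 1
    ext k
    simp only [Finset.mem_filter, Finset.mem_univ, true_and]
    omega

lemma sum_Ico_entry (x : Fin n → ℝ) {a c : ℕ} (h : a ≤ c) :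
    ∑ m ∈ Finset.Ico a c, entry x m = partialSum x c - partialSum x a := by
  have hrange : ∀ m, partialSum x m = ∑ k ∈ Finset.range m, entry x k := fun m => by
    induction m with
    | zero => simp
    | succ m ih => rw [partialSum_succ, ih, Finset.sum_range_succ]
  rw [Finset.sum_Ico_eq_sub _ h, hrange, hrange]

lemma partialSum_add (x y : Fin n → ℝ) (m : ℕ) :
    partialSum (x + y) m = partialSum x m + partialSum y m :=
  Finset.sum_add_distrib

lemma partialSum_smul (t : ℝ) (x : Fin n → ℝ) (m : ℕ) :
    partialSum (t • x) m = t * partialSum x m := by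
  simp only [partialSum, Pi.smul_apply, smul_eq_mul, Finset.mul_sum]

lemma continuous_partialSum (m : ℕ) : Continuous fun x : Fin n → ℝ => partialSum x m :=
  continuous_finsetSum _ fun k _ => continuous_apply k

lemma partialSum_avg_of_ne {p m : ℕ} (hp : p + 1 < n) (hm : m ≠ p + 1) (x : Fin n → ℝ) :
    partialSum (avg ⟨p, by omega⟩ ⟨p + 1, hp⟩ x) m = partialSum x m :=
  sum_avg_of_mem_iff (by simp only [Finset.mem_filter, Finset.mem_univ, true_and]; omega) x

lemma partialSum_avg_succ {p : ℕ} (hp : p + 1 < n) (x : Fin n → ℝ) :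
    partialSum (avg ⟨p, by omega⟩ ⟨p + 1, hp⟩ x) (p + 1) =
      partialSum x p + (x ⟨p, by omega⟩ + x ⟨p + 1, hp⟩) / 2 := by
  rw [partialSum_succ, partialSum_avg_of_ne hp (by omega), entry_of_lt _ (by omega),
    avg_apply_left]

end PartialSums

section Blocks

variable {n : ℕ} {A : Finset ℕ} {j : ℕ}

lemma blockStart_le : blockStart A j ≤ j := Nat.findGreatest_le j

lemma sub_one_blockStart_notMem (h : blockStart A j ≠ 0) : blockStart A j - 1 ∉ A :=
  (Nat.findGreatest_of_ne_zero rfl h).2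

lemma blockEnd_le : blockEnd n A j ≤ n - 1 := Nat.findGreatest_le _

lemma le_blockEnd (hj : j ≤ n - 1) : j ≤ blockEnd n A j := Nat.le_findGreatest hj (by simp)

lemma mem_of_blockStart_le_of_lt_blockEnd (hj : j ≤ n - 1) {m : ℕ} (ham : blockStart A j ≤ m)
    (hmb : m < blockEnd n A j) : m ∈ A := by
  rcases lt_or_ge m j with hmj | hjm
  · by_contra hm
    have : m + 1 ≤ blockStart A j := Nat.le_findGreatest hmj (by simpa using hm)
    omega
  · exact Nat.findGreatest_spec (P := fun b => ∀ m ∈ Finset.Ico j b, m ∈ A) hj (by simp) m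
      (Finset.mem_Ico.2 ⟨hjm, hmb⟩)

lemma blockEnd_notMem (hA : A ⊆ Finset.range (n - 1)) (hj : j ≤ n - 1) :
    blockEnd n A j ∉ A := by
  intro hb
  have hlt : blockEnd n A j < n - 1 := Finset.mem_range.1 (hA hb)
  refine Nat.findGreatest_is_greatest (Nat.lt_succ_self _) hlt fun m hm => ?_
  obtain ⟨hjm, hmb⟩ := Finset.mem_Ico.1 hm
  rcases Nat.lt_succ_iff_lt_or_eq.1 hmb with hmb | rfl
  · exact mem_of_blockStart_le_of_lt_blockEnd hj (blockStart_le.trans hjm) hmb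
  · exact hb

end Blocks

lemma SA_eq_of_constant_on_blocks {n : ℕ} {A : Finset ℕ} {ρ0 x : Fin n → ℝ}
    (hA : A ⊆ Finset.range (n - 1)) (hconst : ∀ i ∈ A, entry x i = entry x (i + 1))
    (hcut : ∀ m < n, m ∉ A → partialSum x (m + 1) = partialSum ρ0 (m + 1)) :
    SA ρ0 A = x := by
  funext j
  have hj : (j : ℕ) ≤ n - 1 := by omega
  set a := blockStart A j
  set b := blockEnd n A j
  have hab : a ≤ b := blockStart_le.trans (le_blockEnd hj)
  have hbn : b < n := by have : b ≤ n - 1 := blockEnd_le; omega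
  have hstart : partialSum x a = partialSum ρ0 a := by
    rcases Nat.eq_zero_or_pos a with ha | ha
    · simp [ha]
    · have := hcut (a - 1) (by omega) (sub_one_blockStart_notMem ha.ne')
      rwa [Nat.sub_add_cancel ha] at this
  have hend : partialSum x (b + 1) = partialSum ρ0 (b + 1) := hcut b hbn (blockEnd_notMem hA hj)
  have hflat : ∀ m, a ≤ m → m ≤ b → entry x m = entry x a := by
    intro m ham
    induction m, ham using Nat.le_induction with
    | base => exact fun _ => rfl
    | succ m ham ih =>
      intro hmb
      rw [← hconst m (mem_of_blockStart_le_of_lt_blockEnd hj ham (by omega)), ih (by omega)]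
  have hsum : ∑ m ∈ Finset.Icc a b, entry x m = ((b - a + 1 : ℕ) : ℝ) * x j := by
    have hxj : entry x a = x j := by
      rw [← hflat j blockStart_le (le_blockEnd hj), entry_of_lt x j.isLt]
    rw [Finset.sum_congr rfl fun m hm => (hflat m (Finset.mem_Icc.1 hm).1
      (Finset.mem_Icc.1 hm).2).trans hxj, Finset.sum_const, Nat.card_Icc, nsmul_eq_mul,
      Nat.sub_add_comm hab]
  change (∑ m ∈ Finset.Icc a b, entry ρ0 m) / ((b - a + 1 : ℕ) : ℝ) = x j
  rw [← Finset.Ico_add_one_right_eq_Icc, sum_Ico_entry ρ0 (by omega), ← hstart, ← hend,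
    ← sum_Ico_entry x (by omega), Finset.Ico_add_one_right_eq_Icc, hsum]
  field_simp

def pathEdgesOn (n : ℕ) (A : Finset ℕ) : Set (Sym2 (Fin n)) :=
  {e | ∃ i ∈ A, ∃ h : i + 1 < n, e = s(⟨i, Nat.lt_of_succ_lt h⟩, ⟨i + 1, h⟩)}

lemma pathEdgesOn_subset_pathEdges (n : ℕ) (A : Finset ℕ) : pathEdgesOn n A ⊆ pathEdges n :=
  fun _ ⟨i, _, h, he⟩ => ⟨i, h, he⟩

theorem SA_mem_closure_attainable {n : ℕ} {A : Finset ℕ} (hA : A ⊆ Finset.range (n - 1))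
    (ρ0 : Fin n → ℝ) : SA ρ0 A ∈ closure (attainable n (pathEdges n) ρ0) := by
  obtain ⟨y, hy, hedge⟩ := exists_mem_closure_attainable_forall_edge_eq (pathEdgesOn n A) ρ0
  have hconst : ∀ i ∈ A, entry y i = entry y (i + 1) := by
    intro i hi
    have hin : i + 1 < n := by have := Finset.mem_range.1 (hA hi); omega
    rw [entry_of_lt y (by omega), entry_of_lt y hin]
    exact hedge _ _ (by simp [Fin.ext_iff]) ⟨i, hi, hin, rfl⟩
  have hcut : ∀ m < n, m ∉ A → partialSum y (m + 1) = partialSum ρ0 (m + 1) := by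
    intro m _ hm
    refine apply_eq_of_mem_closure_attainable (continuous_partialSum (m + 1)) ?_ hy
    rintro i j - ⟨p, hp, hpn, he⟩ ρ
    rw [avg_eq_of_sym2_eq he, partialSum_avg_of_ne hpn fun h => hm (by rwa [Nat.succ_inj.1 h])]
  rw [SA_eq_of_constant_on_blocks hA hconst hcut]
  exact closure_mono (attainable_mono (pathEdgesOn_subset_pathEdges n A)) hy

section Majorization

variable {n : ℕ} {ρ0 x : Fin n → ℝ}

/-- For nondecreasing vectors, being majorized by `ρ0` means that every partial sum (of the
smallest entries) dominates that of `ρ0`, with equal totals. -/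
def monotoneMajorized (ρ0 : Fin n → ℝ) : Set (Fin n → ℝ) :=
  {x | Monotone x ∧ (∀ m ≤ n, partialSum ρ0 m ≤ partialSum x m) ∧
    partialSum x n = partialSum ρ0 n}

lemma self_mem_monotoneMajorized (hρ0 : Monotone ρ0) : ρ0 ∈ monotoneMajorized ρ0 :=
  ⟨hρ0, fun _ _ => le_rfl, rfl⟩

lemma convex_monotoneMajorized : Convex ℝ (monotoneMajorized ρ0) := by
  rintro x ⟨hx, hxs, hxn⟩ y ⟨hy, hys, hyn⟩ a b ha hb hab
  refine ⟨(hx.const_smul ha).add (hy.const_smul hb), fun m hm => ?_, ?_⟩ <;>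
    rw [partialSum_add, partialSum_smul, partialSum_smul]
  · calc partialSum ρ0 m = a * partialSum ρ0 m + b * partialSum ρ0 m := by
          rw [← add_mul, hab, one_mul]
      _ ≤ a * partialSum x m + b * partialSum y m := by
          gcongr
          exacts [hxs m hm, hys m hm]
  · rw [hxn, hyn]; linear_combination partialSum ρ0 n * hab

lemma isClosed_monotoneMajorized : IsClosed (monotoneMajorized ρ0) := by
  have hsum : IsClosed {x : Fin n → ℝ | ∀ m ≤ n, partialSum ρ0 m ≤ partialSum x m} := by
    simp only [Set.ofPred_forall]
    exact isClosed_iInter fun m => isClosed_iInter fun _ =>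
      isClosed_le continuous_const (continuous_partialSum m)
  exact isClosed_monotone.inter
    (hsum.inter (isClosed_eq (continuous_partialSum n) continuous_const))

lemma norm_le_of_mem_monotoneMajorized (hx : x ∈ monotoneMajorized ρ0) : ‖x‖ ≤ ‖ρ0‖ := by
  obtain ⟨hmono, hsum, htot⟩ := hx
  refine (pi_norm_le_iff_of_nonneg (norm_nonneg ρ0)).2 fun k => ?_
  have hn : 0 < n := k.pos
  have hfirst : ρ0 ⟨0, hn⟩ ≤ x k := by
    have h := hsum 1 hn
    simp only [partialSum_succ, partialSum_zero, zero_add, entry_of_lt _ hn] at h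
    exact h.trans (hmono (Fin.le_def.2 (Nat.zero_le _)))
  have hlast : x k ≤ ρ0 ⟨n - 1, by omega⟩ := by
    have h := hsum (n - 1) (by omega)
    have hx := partialSum_succ x (n - 1)
    have hρ := partialSum_succ ρ0 (n - 1)
    rw [Nat.sub_add_cancel hn, entry_of_lt _ (by omega)] at hx hρ
    exact (hmono (show k ≤ ⟨n - 1, by omega⟩ from Fin.le_def.2 (by simp; omega))).trans
      (by linarith)
  rw [Real.norm_eq_abs, abs_le]
  constructor
  · linarith [neg_le_of_abs_le (norm_le_pi_norm ρ0 ⟨0, hn⟩)]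
  · linarith [le_of_abs_le (norm_le_pi_norm ρ0 ⟨n - 1, by omega⟩)]

lemma isCompact_monotoneMajorized : IsCompact (monotoneMajorized ρ0) :=
  (isCompact_closedBall 0 ‖ρ0‖).of_isClosed_subset isClosed_monotoneMajorized
    fun _ hx => by simpa using norm_le_of_mem_monotoneMajorized hx

lemma avg_mem_monotoneMajorized {p : ℕ} (hp : p + 1 < n) (hx : x ∈ monotoneMajorized ρ0) :
    avg ⟨p, by omega⟩ ⟨p + 1, hp⟩ x ∈ monotoneMajorized ρ0 := by
  obtain ⟨hmono, hsum, htot⟩ := hx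
  have hstep : x ⟨p, by omega⟩ ≤ x ⟨p + 1, hp⟩ := hmono (Fin.le_def.2 (by simp))
  refine ⟨fun k l hkl => ?_, fun m hm => ?_, ?_⟩
  · rw [Fin.le_def] at hkl
    simp only [avg, Fin.ext_iff]
    split_ifs with hk hl hl
    · exact le_rfl
    · linarith [hmono (show (⟨p + 1, hp⟩ : Fin n) ≤ l from Fin.le_def.2 (by simp; omega))]
    · linarith [hmono (show k ≤ (⟨p, by omega⟩ : Fin n) from Fin.le_def.2 (by simp; omega))]
    · exact hmono hkl
  · rcases eq_or_ne m (p + 1) with rfl | hmp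
    · have h := partialSum_succ x p
      rw [entry_of_lt _ (by omega)] at h
      rw [partialSum_avg_succ]
      linarith [hsum (p + 1) hm]
    · rw [partialSum_avg_of_ne hp hmp]; exact hsum m hm
  · rw [partialSum_avg_of_ne hp (by omega), htot]

lemma attainable_subset_monotoneMajorized (hρ0 : Monotone ρ0) :
    attainable n (pathEdges n) ρ0 ⊆ monotoneMajorized ρ0 := by
  refine attainable_subset (self_mem_monotoneMajorized hρ0) ?_
  rintro i j - ⟨p, hp, he⟩ x hx
  rw [avg_eq_of_sym2_eq he]
  exact avg_mem_monotoneMajorized hp hx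

end Majorization

lemma eq_zero_of_mem_extremePoints_of_eventually {E : Type*} [AddCommGroup E] [Module ℝ E]
    {S : Set E} {x d : E} (hx : x ∈ S.extremePoints ℝ) (hd : ∀ᶠ t in 𝓝 (0 : ℝ), x + t • d ∈ S) :
    d = 0 := by
  obtain ⟨ε, hε, hball⟩ := Metric.eventually_nhds_iff.1 hd
  have hpos : x + (ε / 2) • d ∈ S := hball (by simp [abs_of_pos hε]; linarith)
  have hneg : x + (-(ε / 2)) • d ∈ S := hball (by simp [abs_of_pos hε]; linarith)
  have hmid : x ∈ openSegment ℝ (x + (ε / 2) • d) (x + (-(ε / 2)) • d) :=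
    ⟨1 / 2, 1 / 2, by norm_num, by norm_num, by norm_num, by module⟩
  have h := ((mem_extremePoints.1 hx).2 _ hpos _ hneg hmid).1
  rw [add_eq_left, smul_eq_zero] at h
  exact h.resolve_left (by positivity)

lemma eventually_add_mul_le_add_mul {u v u' v' : ℝ} (h : u ≤ u') (htight : u = u' → v = v') :
    ∀ᶠ t in 𝓝 (0 : ℝ), u + t * v ≤ u' + t * v' := by
  rcases h.lt_or_eq with hlt | heq
  · refine (ContinuousAt.eventually_lt (by fun_prop) (by fun_prop) ?_).mono fun _ => le_of_lt
    simpa using hlt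
  · exact Eventually.of_forall fun t => by rw [heq, htight heq]

section ExtremePoints

variable {n : ℕ} {ρ0 x : Fin n → ℝ}

/-- Moves mass from `[p, b)` to `[a, p)`; its partial sums vanish outside `(a, b)`. -/
def transfer (n a p b : ℕ) : Fin n → ℝ := fun k =>
  if (k : ℕ) < a then 0 else if (k : ℕ) < p then (b : ℝ) - p
  else if (k : ℕ) < b then -((p : ℝ) - a) else 0

lemma transfer_eq_of_notMem_Ioc {a p b : ℕ} {k l : Fin n} (hkl : k ≤ l)
    (ha : a ∉ Set.Ioc (k : ℕ) l) (hp : p ∉ Set.Ioc (k : ℕ) l) (hb : b ∉ Set.Ioc (k : ℕ) l) :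
    transfer n a p b k = transfer n a p b l := by
  simp only [Set.mem_Ioc, not_and_or, not_lt, not_le] at ha hp hb
  rw [Fin.le_def] at hkl
  simp only [transfer]
  split_ifs <;> first | rfl | (exfalso; omega)

lemma partialSum_transfer_of_le {a p b m : ℕ} (hm : m ≤ a) :
    partialSum (transfer n a p b) m = 0 :=
  Finset.sum_eq_zero fun k hk => by
    simp only [Finset.mem_filter, Finset.mem_univ, true_and] at hk
    simp only [transfer, if_pos (hk.trans_le hm)]

lemma partialSum_transfer_of_ge {a p b m : ℕ} (hap : a ≤ p) (hpb : p ≤ b) (hbn : b ≤ n)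
    (hbm : b ≤ m) : partialSum (transfer n a p b) m = 0 := by
  set d := transfer n a p b
  have hentry : ∀ k, entry d k = if k < a then 0 else if k < p then (b : ℝ) - p
      else if k < b then -((p : ℝ) - a) else 0 := by
    intro k
    by_cases hk : k < n
    · rw [entry_of_lt d hk]; rfl
    · rw [entry, dif_neg hk, if_neg (by omega), if_neg (by omega), if_neg (by omega)]
  have hconst : ∀ {c e : ℕ} (v : ℝ), c ≤ e → (∀ k, c ≤ k → k < e → entry d k = v) →
      ∑ k ∈ Finset.Ico c e, entry d k = (e - c : ℕ) * v := fun v _ h => by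
    rw [Finset.sum_congr rfl fun k hk => h k (Finset.mem_Ico.1 hk).1 (Finset.mem_Ico.1 hk).2,
      Finset.sum_const, Nat.card_Ico, nsmul_eq_mul]
  have h1 := hconst 0 (Nat.zero_le a) fun k _ hk => by rw [hentry, if_pos hk]
  have h2 := hconst ((b : ℝ) - p) hap fun k hk hk' => by
    rw [hentry, if_neg (by omega), if_pos hk']
  have h3 := hconst (-((p : ℝ) - a)) hpb fun k hk hk' => by
    rw [hentry, if_neg (by omega), if_neg (by omega), if_pos hk']
  have h4 := hconst 0 hbm fun k hk _ => by
    rw [hentry, if_neg (by omega), if_neg (by omega), if_neg (by omega)]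
  have htotal := sum_Ico_entry d (Nat.zero_le m)
  rw [← Finset.sum_Ico_consecutive _ (Nat.zero_le a) (by omega : a ≤ m),
    ← Finset.sum_Ico_consecutive _ hap (by omega : p ≤ m),
    ← Finset.sum_Ico_consecutive _ hpb hbm, h1, h2, h3, h4, partialSum_zero] at htotal
  rw [Nat.cast_sub hap, Nat.cast_sub hpb] at htotal
  linarith

lemma entry_sub_one_lt_entry (hρ0 : Monotone ρ0) (hx : x ∈ monotoneMajorized ρ0) {c : ℕ}
    (hc : 0 < c) (hcn : c < n) (htight : partialSum x c = partialSum ρ0 c)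
    (hslack : partialSum x (c - 1) ≠ partialSum ρ0 (c - 1) ∨
      partialSum x (c + 1) ≠ partialSum ρ0 (c + 1)) :
    entry x (c - 1) < entry x c := by
  obtain ⟨c, rfl⟩ : ∃ c', c = c' + 1 := ⟨c - 1, by omega⟩
  simp only [Nat.add_sub_cancel] at hslack ⊢
  have hρ : entry ρ0 c ≤ entry ρ0 (c + 1) := by
    rw [entry_of_lt _ (by omega), entry_of_lt _ hcn]
    exact hρ0 (Fin.le_def.2 (by simp))
  have hx0 := partialSum_succ x c
  have hx1 := partialSum_succ x (c + 1)
  have hρ0' := partialSum_succ ρ0 c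
  have hρ1 := partialSum_succ ρ0 (c + 1)
  have hlow := hx.2.1 c (by omega)
  have hhigh := hx.2.1 (c + 2) (by omega)
  rcases hslack with h | h
  · linarith [lt_of_le_of_ne hlow (Ne.symm h)]
  · linarith [lt_of_le_of_ne hhigh (Ne.symm h)]

lemma entry_sub_one_eq_entry_of_mem_Ioc (hmono : Monotone x) {k l : Fin n} (hkl : x k = x l)
    {c : ℕ} (hc : c ∈ Set.Ioc (k : ℕ) l) : entry x (c - 1) = entry x c := by
  obtain ⟨hkc, hcl⟩ := hc
  rw [entry_of_lt x (by omega), entry_of_lt x (by omega)]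
  have h1 := hmono (show k ≤ ⟨c - 1, by omega⟩ from Fin.le_def.2 (by simp; omega))
  have h2 := hmono (show (⟨c - 1, by omega⟩ : Fin n) ≤ ⟨c, by omega⟩ from Fin.le_def.2 (by simp))
  have h3 := hmono (show ⟨c, by omega⟩ ≤ l from Fin.le_def.2 (by simpa using hcl))
  linarith

lemma eventually_add_smul_transfer_mem (hρ0 : Monotone ρ0) (hx : x ∈ monotoneMajorized ρ0)
    {a p b : ℕ} (hap : a < p) (hpb : p < b) (hbn : b ≤ n)
    (hta : partialSum x a = partialSum ρ0 a) (htb : partialSum x b = partialSum ρ0 b)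
    (hslack : ∀ m, a < m → m < b → partialSum x m ≠ partialSum ρ0 m)
    (hjump : entry x (p - 1) < entry x p) :
    ∀ᶠ t in 𝓝 (0 : ℝ), x + t • transfer n a p b ∈ monotoneMajorized ρ0 := by
  set d := transfer n a p b
  have hflat : ∀ k l : Fin n, x k = x l →
      ∀ c, c = a ∨ c = p ∨ c = b → c ∉ Set.Ioc (k : ℕ) l := by
    rintro k l hkl c hc hmem
    have hc0 : 0 < c := by have := hmem.1; omega
    have hcn : c < n := by have := hmem.2; omega
    refine (entry_sub_one_eq_entry_of_mem_Ioc hx.1 hkl hmem).not_lt ?_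
    rcases hc with rfl | rfl | rfl
    · exact entry_sub_one_lt_entry hρ0 hx hc0 hcn hta (Or.inr (hslack _ (by omega) (by omega)))
    · exact hjump
    · exact entry_sub_one_lt_entry hρ0 hx hc0 hcn htb (Or.inl (hslack _ (by omega) (by omega)))
  have hmono : ∀ᶠ t in 𝓝 (0 : ℝ), ∀ k l : Fin n, k ≤ l → x k + t * d k ≤ x l + t * d l := by
    refine eventually_all.2 fun k => eventually_all.2 fun l => ?_
    by_cases hkl : k ≤ l
    · refine (eventually_add_mul_le_add_mul (hx.1 hkl) fun h => ?_).mono fun _ ht _ => ht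
      exact transfer_eq_of_notMem_Ioc hkl (hflat k l h a (by simp)) (hflat k l h p (by simp))
        (hflat k l h b (by simp))
    · exact Eventually.of_forall fun _ h => absurd h hkl
  have hsum : ∀ᶠ t in 𝓝 (0 : ℝ), ∀ m ∈ Set.Iic n,
      partialSum ρ0 m + t * 0 ≤ partialSum x m + t * partialSum d m := by
    refine (eventually_all_finite (Set.finite_Iic n)).2 fun m hm =>
      eventually_add_mul_le_add_mul (hx.2.1 m hm) fun h => ?_
    rcases le_or_gt m a with hma | ham
    · rw [partialSum_transfer_of_le hma]
    rcases le_or_gt b m with hbm | hmb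
    · rw [partialSum_transfer_of_ge hap.le hpb.le hbn hbm]
    exact absurd h.symm (hslack m ham hmb)
  filter_upwards [hmono, hsum] with t hmono hsum
  refine ⟨fun k l hkl => by simpa using hmono k l hkl, fun m hm => ?_, ?_⟩
  · rw [partialSum_add, partialSum_smul]; simpa using hsum m hm
  · rw [partialSum_add, partialSum_smul, partialSum_transfer_of_ge hap.le hpb.le hbn hbn,
      mul_zero, add_zero, hx.2.2]

theorem entry_eq_entry_succ_of_mem_extremePoints (hρ0 : Monotone ρ0)
    (hx : x ∈ (monotoneMajorized ρ0).extremePoints ℝ) {i : ℕ} (hi : i + 1 < n)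
    (hslack : partialSum x (i + 1) ≠ partialSum ρ0 (i + 1)) :
    entry x i = entry x (i + 1) := by
  have hxK := hx.1
  by_contra hne
  have hjump : entry x (i + 1 - 1) < entry x (i + 1) := by
    rw [entry_of_lt x (by omega), entry_of_lt x hi] at hne ⊢
    exact lt_of_le_of_ne (hxK.1 (Fin.le_def.2 (by simp))) hne
  let P m := partialSum x m = partialSum ρ0 m
  have hexists : ∃ b, i + 1 < b ∧ P b := ⟨n, hi, hxK.2.2⟩
  set a := Nat.findGreatest P i
  set b := Nat.find hexists
  have hta : P a := Nat.findGreatest_spec (Nat.zero_le i) (by simp [P])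
  obtain ⟨hpb, htb⟩ : i + 1 < b ∧ P b := Nat.find_spec hexists
  have hslack' : ∀ m, a < m → m < b → ¬P m := by
    intro m ham hmb hm
    rcases le_or_gt m i with hmi | him
    · exact Nat.findGreatest_is_greatest ham hmi hm
    rcases (Nat.succ_le_of_lt him).eq_or_lt with rfl | him'
    · exact hslack hm
    · exact Nat.find_min hexists hmb ⟨him', hm⟩
  have hd := eq_zero_of_mem_extremePoints_of_eventually hx
    (eventually_add_smul_transfer_mem hρ0 hxK (Nat.lt_succ_of_le (Nat.findGreatest_le i)) hpb
      (Nat.find_min' hexists ⟨hi, hxK.2.2⟩) hta htb hslack' hjump)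
  have hda := congrFun hd ⟨a, by have := Nat.findGreatest_le (P := P) i; omega⟩
  simp only [transfer, Pi.zero_apply] at hda
  split_ifs at hda with h1 h2
  · exact lt_irrefl _ h1
  · rw [sub_eq_zero, Nat.cast_inj] at hda
    omega
  all_goals exact h2 (Nat.lt_succ_of_le (Nat.findGreatest_le i))

end ExtremePoints

theorem exists_eq_SA_of_mem_extremePoints {n : ℕ} {ρ0 x : Fin n → ℝ} (hρ0 : Monotone ρ0)
    (hx : x ∈ (monotoneMajorized ρ0).extremePoints ℝ) :
    ∃ A ⊆ Finset.range (n - 1), x = SA ρ0 A := by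
  classical
  set A := (Finset.range (n - 1)).filter fun i => partialSum x (i + 1) ≠ partialSum ρ0 (i + 1)
  refine ⟨A, Finset.filter_subset _ _, (SA_eq_of_constant_on_blocks (Finset.filter_subset _ _)
    (fun i hi => ?_) fun m hm hmA => ?_).symm⟩
  · obtain ⟨hi, hslack⟩ := Finset.mem_filter.1 hi
    exact entry_eq_entry_succ_of_mem_extremePoints hρ0 hx
      (by have := Finset.mem_range.1 hi; omega) hslack
  · simp only [Finset.mem_filter, Finset.mem_range, not_and, not_not] at hmA
    rcases lt_or_ge m (n - 1) with hm' | hm'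
    · exact hmA hm'
    · rw [show m + 1 = n by omega]
      exact hx.1.2.2

lemma finite_setOf_SA {n : ℕ} (ρ0 : Fin n → ℝ) :
    {σ | ∃ A ⊆ Finset.range (n - 1), σ = SA ρ0 A}.Finite := by
  refine ((Finset.range (n - 1)).powerset.finite_toSet.image (SA ρ0)).subset ?_
  rintro σ ⟨A, hA, rfl⟩
  exact ⟨A, Finset.mem_powerset.2 hA, rfl⟩

theorem monotoneMajorized_subset_convexHull_SA {n : ℕ} {ρ0 : Fin n → ℝ} (hρ0 : Monotone ρ0) :
    monotoneMajorized ρ0 ⊆ convexHull ℝ {σ | ∃ A ⊆ Finset.range (n - 1), σ = SA ρ0 A} :=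
  calc monotoneMajorized ρ0
      = closure (convexHull ℝ ((monotoneMajorized ρ0).extremePoints ℝ)) :=
        (closure_convexHull_extremePoints isCompact_monotoneMajorized
          convex_monotoneMajorized).symm
    _ ⊆ closure (convexHull ℝ {σ | ∃ A ⊆ Finset.range (n - 1), σ = SA ρ0 A}) :=
        closure_mono (convexHull_mono fun _ hx => exists_eq_SA_of_mem_extremePoints hρ0 hx)
    _ = convexHull ℝ {σ | ∃ A ⊆ Finset.range (n - 1), σ = SA ρ0 A} :=
        ((finite_setOf_SA ρ0).isClosed_convexHull ℝ).closure_eq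

theorem closure_convexHull_attainable_path_eq_general (n : ℕ)
    (ρ0 : Fin n → ℝ) (hρ0 : Monotone ρ0) :
    closure (convexHull ℝ (attainable n (pathEdges n) ρ0)) =
      convexHull ℝ {σ | ∃ A ⊆ Finset.range (n - 1), σ = SA ρ0 A} := by
  apply subset_antisymm
  · have hK : closure (convexHull ℝ (attainable n (pathEdges n) ρ0)) ⊆ monotoneMajorized ρ0 :=
      closure_minimal (convexHull_min (attainable_subset_monotoneMajorized hρ0)
        convex_monotoneMajorized) isClosed_monotoneMajorized
    exact hK.trans (monotoneMajorized_subset_convexHull_SA hρ0)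
  · refine convexHull_min ?_ (convex_convexHull ℝ _).closure
    rintro σ ⟨A, hA, rfl⟩
    exact closure_mono (subset_convexHull ℝ _) (SA_mem_closure_attainable hA ρ0)

/-- For every `n ≥ 1` and every nondecreasing initial vector `ρ0 ∈ ℝ^n`, the closure of
the convex hull of the attainable set for the path graph `P_n` equals the convex hull of
the finite set `{S_A : A ⊆ {1, …, n-1}}`. -/
theorem closure_convexHull_attainable_path_eq (n : ℕ) (hn : 1 ≤ n)
    (ρ0 : Fin n → ℝ) (hρ0 : Monotone ρ0) :
    closure (convexHull ℝ (attainable n (pathEdges n) ρ0)) =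
      convexHull ℝ {σ | ∃ A ⊆ Finset.range (n - 1), σ = SA ρ0 A} :=
  closure_convexHull_attainable_path_eq_general n ρ0 hρ0
end

section
/- (Lemma 1) For every n ≥ 1, every nondecreasing initial vector ρ0 ∈ ℝ^n, and every subset A ⊆ {1,…,n−1}, the point S_A lies in the topological closure of the attainable set A(ρ0, E_P) for the path graph P_n. -/
namespace SAaux

/-! ### Block structure lemmas -/

lemma findGreatest_congr {P Q : ℕ → Prop} [DecidablePred P] [DecidablePred Q]
    (h : ∀ b, P b ↔ Q b) : ∀ k, Nat.findGreatest P k = Nat.findGreatest Q k := by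
  intro k
  induction k with
  | zero => rfl
  | succ k ih =>
    rw [Nat.findGreatest_succ, Nat.findGreatest_succ, ih, if_congr (h _) rfl rfl]

lemma bs_le (A : Finset ℕ) (j : ℕ) : blockStart A j ≤ j := Nat.findGreatest_le j

lemma bs_mem (A : Finset ℕ) {j m : ℕ} (h1 : blockStart A j ≤ m) (h2 : m < j) : m ∈ A := by
  have h : ¬((fun a => a ≠ 0 ∧ (a - 1) ∉ A) (m + 1)) :=
    Nat.findGreatest_is_greatest (n := j) (k := m + 1) (Nat.lt_succ_of_le h1) (by omega)
  by_contra hm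
  exact h ⟨by omega, by simpa using hm⟩

lemma le_be (n : ℕ) (A : Finset ℕ) {j : ℕ} (hj : j ≤ n - 1) : j ≤ blockEnd n A j :=
  Nat.le_findGreatest hj (by simp)

lemma be_le (n : ℕ) (A : Finset ℕ) (j : ℕ) : blockEnd n A j ≤ n - 1 :=
  Nat.findGreatest_le _

lemma be_mem (n : ℕ) (A : Finset ℕ) {j : ℕ} (hj : j ≤ n - 1) {m : ℕ}
    (h1 : j ≤ m) (h2 : m < blockEnd n A j) : m ∈ A := by
  have hspec : ∀ x ∈ Finset.Ico j (blockEnd n A j), x ∈ A :=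
    Nat.findGreatest_spec (P := fun b => ∀ m ∈ Finset.Ico j b, m ∈ A) (m := j) hj (by intro x hx; rw [Finset.mem_Ico] at hx; omega)
  exact hspec m (Finset.mem_Ico.mpr ⟨h1, h2⟩)

lemma be_ge_succ (n : ℕ) (A : Finset ℕ) {p : ℕ} (hp : p ∈ A) (hp2 : p + 1 ≤ n - 1) :
    p + 1 ≤ blockEnd n A p := by
  apply Nat.le_findGreatest hp2
  intro m hm
  have : m = p := by simp [Finset.mem_Ico] at hm; omega
  exact this ▸ hp

lemma bs_adj (A : Finset ℕ) {p : ℕ} (hp : p ∈ A) : blockStart A (p + 1) = blockStart A p := by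
  unfold blockStart
  rw [Nat.findGreatest_succ]
  simp [hp]

lemma be_adj (n : ℕ) (A : Finset ℕ) {p : ℕ} (hp : p ∈ A) :
    blockEnd n A (p + 1) = blockEnd n A p := by
  unfold blockEnd
  apply findGreatest_congr
  intro b
  constructor
  · intro h m hm
    rcases Finset.mem_Ico.mp hm with ⟨h1, h2⟩
    rcases eq_or_lt_of_le h1 with rfl | h1'
    · exact hp
    · exact h m (Finset.mem_Ico.mpr ⟨h1', h2⟩)
  · intro h m hm
    rcases Finset.mem_Ico.mp hm with ⟨h1, h2⟩
    exact h m (Finset.mem_Ico.mpr ⟨by omega, h2⟩)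

lemma chain (n : ℕ) (A : Finset ℕ) :
    ∀ b a, a ≤ b → (∀ m, a ≤ m → m < b → m ∈ A) →
      blockStart A a = blockStart A b ∧ blockEnd n A a = blockEnd n A b := by
  intro b
  induction b with
  | zero => intro a ha _; have : a = 0 := Nat.le_zero.mp ha; subst this; exact ⟨rfl, rfl⟩
  | succ b ih =>
    intro a ha h
    rcases eq_or_lt_of_le ha with rfl | ha'
    · exact ⟨rfl, rfl⟩
    · have hab : a ≤ b := by omega
      have hb : b ∈ A := h b hab (by omega)
      obtain ⟨h1, h2⟩ := ih a hab (fun m hm1 hm2 => h m hm1 (by omega))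
      exact ⟨h1.trans (bs_adj A hb).symm, h2.trans (be_adj n A hb).symm⟩

lemma block_eq (n : ℕ) (A : Finset ℕ) {j m : ℕ} (hj : j ≤ n - 1)
    (h1 : blockStart A j ≤ m) (h2 : m ≤ blockEnd n A j) :
    blockStart A m = blockStart A j ∧ blockEnd n A m = blockEnd n A j := by
  rcases le_total m j with hmj | hjm
  · exact chain n A j m hmj (fun x hx1 hx2 => bs_mem A (le_trans h1 hx1) hx2)
  · have h := chain n A m j hjm (fun x hx1 hx2 => be_mem n A hj hx1 (lt_of_lt_of_le hx2 h2))
    exact ⟨h.1.symm, h.2.symm⟩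

lemma mem_block_iff (n : ℕ) (A : Finset ℕ) (hA : A ⊆ Finset.range (n - 1))
    {j p : ℕ} (hj : j ≤ n - 1) (hp : p ∈ A) :
    (blockStart A j ≤ p ∧ p ≤ blockEnd n A j) ↔
      (blockStart A j ≤ p + 1 ∧ p + 1 ≤ blockEnd n A j) := by
  have hpn : p + 1 ≤ n - 1 := by have := hA hp; simp [Finset.mem_range] at this; omega
  constructor
  · rintro ⟨h1, h2⟩
    obtain ⟨e1, e2⟩ := block_eq n A hj h1 h2
    have h3 : p + 1 ≤ blockEnd n A p := be_ge_succ n A hp hpn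
    exact ⟨by omega, by omega⟩
  · rintro ⟨h1, h2⟩
    obtain ⟨e1, e2⟩ := block_eq n A hj h1 h2
    have hb : blockStart A (p + 1) = blockStart A p := bs_adj A hp
    have h3 : blockStart A p ≤ p := bs_le A p
    exact ⟨by omega, by omega⟩

end SAaux
/-! ### Sums, averaging, attainability -/

noncomputable def dval (n : ℕ) (ρ : Fin n → ℝ) (m : ℕ) : ℝ :=
  if h : m < n then ρ ⟨m, h⟩ else 0

noncomputable def bsum (n : ℕ) (A : Finset ℕ) (j : ℕ) (ρ : Fin n → ℝ) : ℝ :=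
  ∑ m ∈ Finset.Icc (blockStart A j) (blockEnd n A j), dval n ρ m

lemma sum_pair_eq {α : Type*} [DecidableEq α] (s : Finset α) {i j : α} (hi : i ∈ s)
    (hj : j ∈ s) (hij : i ≠ j) (f g : α → ℝ) (c : ℝ)
    (h : ∀ k ∈ s, k ≠ i → k ≠ j → f k = g k) (hfij : f i + f j = g i + g j + c) :
    ∑ k ∈ s, f k = (∑ k ∈ s, g k) + c := by
  have hj' : j ∈ s.erase i := Finset.mem_erase.mpr ⟨hij.symm, hj⟩
  rw [← Finset.add_sum_erase s f hi, ← Finset.add_sum_erase s g hi,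
      ← Finset.add_sum_erase _ f hj', ← Finset.add_sum_erase _ g hj']
  have he : ∑ k ∈ (s.erase i).erase j, f k = ∑ k ∈ (s.erase i).erase j, g k := by
    apply Finset.sum_congr rfl
    intro k hk
    simp only [Finset.mem_erase] at hk
    exact h k hk.2.2 hk.2.1 hk.1
  rw [he]; linarith

lemma avg_sum_sq {n : ℕ} {i j : Fin n} (hij : i ≠ j) (ρ : Fin n → ℝ) :
    ∑ k, (avg i j ρ k) ^ 2 = (∑ k, (ρ k) ^ 2) + (-((ρ i - ρ j) ^ 2 / 2)) := by
  apply sum_pair_eq Finset.univ (Finset.mem_univ i) (Finset.mem_univ j) hij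
  · intro k _ h1 h2
    simp [avg, h1, h2]
  · simp only [avg, eq_self_iff_true, true_or, or_true, if_true]
    ring

lemma avg_bsum {n : ℕ} {A : Finset ℕ} (hA : A ⊆ Finset.range (n - 1))
    {p : ℕ} (hp : p ∈ A) (h1 : p + 1 < n) (ρ : Fin n → ℝ) {j : ℕ} (hj : j ≤ n - 1) :
    bsum n A j (avg ⟨p, Nat.lt_of_succ_lt h1⟩ ⟨p + 1, h1⟩ ρ) = bsum n A j ρ := by
  unfold bsum
  by_cases hpin : blockStart A j ≤ p ∧ p ≤ blockEnd n A j
  · have hpin' := (SAaux.mem_block_iff n A hA hj hp).mp hpin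
    have := sum_pair_eq (Finset.Icc (blockStart A j) (blockEnd n A j))
      (Finset.mem_Icc.mpr hpin) (Finset.mem_Icc.mpr hpin') (by omega)
      (fun m => dval n (avg ⟨p, Nat.lt_of_succ_lt h1⟩ ⟨p + 1, h1⟩ ρ) m)
      (fun m => dval n ρ m) 0
      (by
        intro m _ hm1 hm2
        simp only [dval]
        split
        · next hmn =>
            have e1 : (⟨m, hmn⟩ : Fin n) ≠ ⟨p, Nat.lt_of_succ_lt h1⟩ := by
              simp [Fin.ext_iff]; omega
            have e2 : (⟨m, hmn⟩ : Fin n) ≠ ⟨p + 1, h1⟩ := by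
              simp [Fin.ext_iff]; omega
            simp [avg, e1, e2]
        · rfl)
      (by
        have hpn : p < n := Nat.lt_of_succ_lt h1
        simp only [dval, avg, dif_pos hpn, dif_pos h1, eq_self_iff_true, true_or,
          or_true, if_true, Fin.mk.injEq]
        ring)
    simpa using this
  · have hpin' : ¬(blockStart A j ≤ p + 1 ∧ p + 1 ≤ blockEnd n A j) :=
      fun h => hpin ((SAaux.mem_block_iff n A hA hj hp).mpr h)
    apply Finset.sum_congr rfl
    intro m hm
    rw [Finset.mem_Icc] at hm
    unfold dval
    split
    · next hmn =>
        have e1 : (⟨m, hmn⟩ : Fin n) ≠ ⟨p, Nat.lt_of_succ_lt h1⟩ := by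
          simp [Fin.ext_iff]; omega
        have e2 : (⟨m, hmn⟩ : Fin n) ≠ ⟨p + 1, h1⟩ := by
          simp [Fin.ext_iff]; omega
        simp [avg, e1, e2]
    · rfl

noncomputable def run (n : ℕ) (L : List ℕ) (ρ : Fin n → ℝ) : Fin n → ℝ :=
  L.foldl (fun σ p => stepAt n p σ) ρ

lemma run_nil (n : ℕ) (ρ : Fin n → ℝ) : run n [] ρ = ρ := rfl

lemma run_cons (n : ℕ) (p : ℕ) (L : List ℕ) (ρ : Fin n → ℝ) :
    run n (p :: L) ρ = run n L (stepAt n p ρ) := rfl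

lemma step_attainable {n : ℕ} {ρ0 ρ : Fin n → ℝ}
    (h : ρ ∈ attainable n (pathEdges n) ρ0) (p : ℕ) :
    stepAt n p ρ ∈ attainable n (pathEdges n) ρ0 := by
  unfold stepAt
  split
  · next hp =>
    obtain ⟨L, hL, rfl⟩ := h
    refine ⟨L ++ [(⟨p, Nat.lt_of_succ_lt hp⟩, ⟨p + 1, hp⟩)], ?_, ?_⟩
    · intro q hq
      rcases List.mem_append.mp hq with hq | hq
      · exact hL q hq
      · simp at hq
        subst hq
        exact ⟨by simp [Fin.ext_iff], ⟨p, hp, rfl⟩⟩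
    · simp [List.foldl_append]
  · exact h

lemma run_attainable {n : ℕ} {ρ0 : Fin n → ℝ} :
    ∀ (L : List ℕ) (ρ : Fin n → ℝ), ρ ∈ attainable n (pathEdges n) ρ0 →
      run n L ρ ∈ attainable n (pathEdges n) ρ0 := by
  intro L
  induction L with
  | nil => intro ρ h; exact h
  | cons p L ih => intro ρ h; rw [run_cons]; exact ih _ (step_attainable h p)

lemma run_bsum {n : ℕ} {A : Finset ℕ} (hA : A ⊆ Finset.range (n - 1)) (hn : 1 ≤ n) :
    ∀ (L : List ℕ), (∀ p ∈ L, p ∈ A) → ∀ (ρ : Fin n → ℝ) {j : ℕ}, j ≤ n - 1 →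
      bsum n A j (run n L ρ) = bsum n A j ρ := by
  intro L
  induction L with
  | nil => intro _ ρ j _; rfl
  | cons p L ih =>
    intro hmem ρ j hj
    have hp : p ∈ A := hmem p (by simp)
    have hpn : p + 1 < n := by
      have := hA hp; rw [Finset.mem_range] at this; omega
    rw [run_cons, ih (fun q hq => hmem q (by simp [hq])) _ hj]
    unfold stepAt
    rw [dif_pos hpn]
    exact avg_bsum hA hp hpn ρ hj
lemma sumsq_nonneg {n : ℕ} (ρ : Fin n → ℝ) : 0 ≤ ∑ k, (ρ k) ^ 2 :=
  Finset.sum_nonneg fun k _ => sq_nonneg _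

lemma exists_flat {n : ℕ} {A : Finset ℕ} (hA : A ⊆ Finset.range (n - 1)) (hn : 1 ≤ n)
    {δ : ℝ} (hδ : 0 < δ) :
    ∀ k : ℕ, ∀ ρ : Fin n → ℝ, (∑ m, (ρ m) ^ 2) ≤ k * (δ ^ 2 / 2) →
      ∃ L : List ℕ, (∀ p ∈ L, p ∈ A) ∧
        ∀ p ∈ A, ∀ h : p + 1 < n,
          |run n L ρ ⟨p + 1, h⟩ - run n L ρ ⟨p, Nat.lt_of_succ_lt h⟩| < δ := by
  intro k
  induction k with
  | zero =>
    intro ρ hV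
    by_cases hflat : ∀ p ∈ A, ∀ h : p + 1 < n, |ρ ⟨p + 1, h⟩ - ρ ⟨p, Nat.lt_of_succ_lt h⟩| < δ
    · exact ⟨[], by simp, by simpa [run_nil] using hflat⟩
    · exfalso
      push_neg at hflat
      obtain ⟨p, hp, h, hgap⟩ := hflat
      set i : Fin n := ⟨p, Nat.lt_of_succ_lt h⟩
      set i' : Fin n := ⟨p + 1, h⟩
      have hne : i ≠ i' := by simp [i, i', Fin.ext_iff]
      have hVnew := avg_sum_sq hne ρ
      have hsq : δ ^ 2 ≤ (ρ i - ρ i') ^ 2 := by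
        have h1 : δ ≤ |ρ i' - ρ i| := hgap
        have h2 : δ ^ 2 ≤ |ρ i' - ρ i| ^ 2 := by
          apply pow_le_pow_left₀ hδ.le h1
        rw [sq_abs] at h2
        nlinarith
      have h0 := sumsq_nonneg (avg i i' ρ)
      have h1 := sumsq_nonneg ρ
      simp only [Nat.cast_zero, zero_mul] at hV
      nlinarith
  | succ k ih =>
    intro ρ hV
    by_cases hflat : ∀ p ∈ A, ∀ h : p + 1 < n, |ρ ⟨p + 1, h⟩ - ρ ⟨p, Nat.lt_of_succ_lt h⟩| < δ
    · exact ⟨[], by simp, by simpa [run_nil] using hflat⟩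
    · push_neg at hflat
      obtain ⟨p, hp, h, hgap⟩ := hflat
      set i : Fin n := ⟨p, Nat.lt_of_succ_lt h⟩
      set i' : Fin n := ⟨p + 1, h⟩
      have hne : i ≠ i' := by simp [i, i', Fin.ext_iff]
      have hVnew := avg_sum_sq hne ρ
      have hsq : δ ^ 2 ≤ (ρ i - ρ i') ^ 2 := by
        have h1 : δ ≤ |ρ i' - ρ i| := hgap
        have h2 : δ ^ 2 ≤ |ρ i' - ρ i| ^ 2 := pow_le_pow_left₀ hδ.le h1 2
        rw [sq_abs] at h2
        nlinarith
      have hVle : (∑ m, (avg i i' ρ m) ^ 2) ≤ k * (δ ^ 2 / 2) := by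
        push_cast at hV ⊢
        nlinarith
      obtain ⟨L, hL, hLflat⟩ := ih (avg i i' ρ) hVle
      refine ⟨p :: L, ?_, ?_⟩
      · intro q hq
        rcases List.mem_cons.mp hq with rfl | hq
        · exact hp
        · exact hL q hq
      · have hstep : stepAt n p ρ = avg i i' ρ := by
          unfold stepAt
          rw [dif_pos h]
        intro q hq hq2
        rw [run_cons, hstep]
        exact hLflat q hq hq2
lemma walk {n : ℕ} {A : Finset ℕ} {δ : ℝ} (hδ : 0 < δ) (ρ : Fin n → ℝ)
    (flat : ∀ p ∈ A, ∀ h : p + 1 < n, |ρ ⟨p + 1, h⟩ - ρ ⟨p, Nat.lt_of_succ_lt h⟩| < δ) :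
    ∀ (d x : ℕ) (hx : x + d < n), (∀ m, x ≤ m → m < x + d → m ∈ A) →
      |ρ ⟨x + d, hx⟩ - ρ ⟨x, by omega⟩| ≤ d * δ := by
  intro d
  induction d with
  | zero => intro x hx _; simp
  | succ d ih =>
    intro x hx hall
    have hx' : x + d < n := by omega
    have hmem : x + d ∈ A := hall (x + d) (by omega) (by omega)
    have hx'' : (x + d) + 1 < n := by omega
    have h1 : |ρ ⟨(x + d) + 1, hx''⟩ - ρ ⟨x + d, hx'⟩| < δ := flat (x + d) hmem hx''
    have h2 : |ρ ⟨x + d, hx'⟩ - ρ ⟨x, by omega⟩| ≤ d * δ :=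
      ih x hx' (fun m hm1 hm2 => hall m hm1 (by omega))
    have h3 : (⟨x + (d + 1), hx⟩ : Fin n) = ⟨(x + d) + 1, hx''⟩ := by
      simp [Fin.ext_iff]; omega
    rw [h3]
    calc |ρ ⟨(x + d) + 1, hx''⟩ - ρ ⟨x, by omega⟩|
        ≤ |ρ ⟨(x + d) + 1, hx''⟩ - ρ ⟨x + d, hx'⟩| + |ρ ⟨x + d, hx'⟩ - ρ ⟨x, by omega⟩| :=
          abs_sub_le _ _ _
      _ ≤ δ + d * δ := by linarith
      _ = (d + 1 : ℕ) * δ := by push_cast; ring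
/-- Lemma 1: for nondecreasing `ρ0`, every point `S_A` lies in the topological closure
of the attainable set of the path graph `P_n`. -/
theorem SA_mem_closure_attainable_path (n : ℕ) (hn : 1 ≤ n)
    (ρ0 : Fin n → ℝ) (hρ0 : Monotone ρ0)
    (A : Finset ℕ) (hA : A ⊆ Finset.range (n - 1)) :
    SA ρ0 A ∈ closure (attainable n (pathEdges n) ρ0) := by
  rw [Metric.mem_closure_iff]
  intro ε hε
  set δ : ℝ := ε / (n + 1) with hδdef
  have hδ : 0 < δ := by positivity
  obtain ⟨k, hk⟩ := exists_nat_ge ((∑ m, (ρ0 m) ^ 2) / (δ ^ 2 / 2))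
  have hV : (∑ m, (ρ0 m) ^ 2) ≤ k * (δ ^ 2 / 2) := by
    rw [div_le_iff₀ (by positivity)] at hk
    linarith
  obtain ⟨L, hL, hflat⟩ := exists_flat hA hn hδ k ρ0 hV
  set ρ' := run n L ρ0 with hρ'def
  have hnδ : (n : ℝ) * δ < ε := by
    rw [hδdef, mul_div_assoc', div_lt_iff₀ (by positivity)]
    nlinarith
  refine ⟨ρ', run_attainable L ρ0 ⟨[], by simp, rfl⟩, ?_⟩
  rw [dist_pi_lt_iff hε]
  intro j
  rw [Real.dist_eq, abs_sub_comm]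
  have hjn : (j : ℕ) ≤ n - 1 := by have := j.isLt; omega
  have hab : blockStart A (j : ℕ) ≤ (j : ℕ) := SAaux.bs_le A _
  have hjb : (j : ℕ) ≤ blockEnd n A (j : ℕ) := SAaux.le_be n A hjn
  have hbn : blockEnd n A (j : ℕ) ≤ n - 1 := SAaux.be_le n A _
  set a := blockStart A (j : ℕ) with ha
  set b := blockEnd n A (j : ℕ) with hb
  -- every entry of ρ' in the block of j is within n·δ of ρ' j
  have key : ∀ m ∈ Finset.Icc a b, |ρ' j - dval n ρ' m| ≤ (n : ℝ) * δ := by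
    intro m hm
    rw [Finset.mem_Icc] at hm
    have hmn : m < n := by omega
    have hdv : dval n ρ' m = ρ' ⟨m, hmn⟩ := dif_pos hmn
    rw [hdv]
    rcases le_total (j : ℕ) m with hjm | hmj
    · obtain ⟨d, hd⟩ : ∃ d, m = (j : ℕ) + d := ⟨m - j, by omega⟩
      subst hd
      have hdn : ((d : ℝ)) * δ ≤ (n : ℝ) * δ := by
        have : d ≤ n := by omega
        exact mul_le_mul_of_nonneg_right (by exact_mod_cast this) hδ.le
      have hw := walk hδ ρ' hflat d (j : ℕ) hmn
        (fun x hx1 hx2 => SAaux.be_mem n A hjn hx1 (by omega))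
      have hj' : (⟨(j : ℕ), by omega⟩ : Fin n) = j := by simp [Fin.ext_iff]
      rw [hj'] at hw
      rw [abs_sub_comm]
      exact le_trans hw hdn
    · obtain ⟨d, hd⟩ : ∃ d, (j : ℕ) = m + d := ⟨(j : ℕ) - m, by omega⟩
      have hdn : ((d : ℝ)) * δ ≤ (n : ℝ) * δ := by
        have : d ≤ n := by omega
        exact mul_le_mul_of_nonneg_right (by exact_mod_cast this) hδ.le
      have hjlt : m + d < n := by omega
      have hw := walk hδ ρ' hflat d m hjlt
        (fun x hx1 hx2 => SAaux.bs_mem A (le_trans hm.1 hx1) (by omega))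
      have hj' : (⟨m + d, hjlt⟩ : Fin n) = j := by simp [Fin.ext_iff]; omega
      rw [hj'] at hw
      exact le_trans hw hdn
  -- the block sum is preserved
  have hpres : bsum n A (j : ℕ) ρ' = bsum n A (j : ℕ) ρ0 :=
    run_bsum hA hn L hL ρ0 hjn
  set Lr : ℝ := ((b - a + 1 : ℕ) : ℝ) with hLr
  have hLrpos : (0 : ℝ) < Lr := by
    rw [hLr]
    exact_mod_cast Nat.succ_pos _
  have hSA : SA ρ0 A j = bsum n A (j : ℕ) ρ0 / Lr := rfl
  have hcard : (Finset.Icc a b).card = b - a + 1 := by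
    rw [Nat.card_Icc]; omega
  have hTsub : Lr * ρ' j - bsum n A (j : ℕ) ρ' =
      ∑ m ∈ Finset.Icc a b, (ρ' j - dval n ρ' m) := by
    rw [Finset.sum_sub_distrib, Finset.sum_const, hcard, hLr, nsmul_eq_mul]
    rfl
  have habs : |Lr * ρ' j - bsum n A (j : ℕ) ρ'| ≤ Lr * ((n : ℝ) * δ) := by
    rw [hTsub]
    refine le_trans (Finset.abs_sum_le_sum_abs _ _) ?_
    calc ∑ m ∈ Finset.Icc a b, |ρ' j - dval n ρ' m|
        ≤ ∑ _m ∈ Finset.Icc a b, (n : ℝ) * δ := Finset.sum_le_sum key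
      _ = Lr * ((n : ℝ) * δ) := by
          rw [Finset.sum_const, hcard, hLr, nsmul_eq_mul]
  have hfinal : |ρ' j - SA ρ0 A j| ≤ (n : ℝ) * δ := by
    rw [hSA, ← hpres]
    have heq : ρ' j - bsum n A (j : ℕ) ρ' / Lr = (Lr * ρ' j - bsum n A (j : ℕ) ρ') / Lr := by
      field_simp
    rw [heq, abs_div, abs_of_pos hLrpos, div_le_iff₀ hLrpos]
    calc |Lr * ρ' j - bsum n A (j : ℕ) ρ'| ≤ Lr * ((n : ℝ) * δ) := habs
      _ = (n : ℝ) * δ * Lr := by ring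
  linarith
end

section
/- Let n ≥ 1 and let ρ0 ∈ ℝ^n be nondecreasing. For every subset A ⊆ {1,…,n−1} and every index 1 ≤ i ≤ n−1, the vector B_{i,i+1}(S_A) lies in the convex hull of the finite set {S_C : C ⊆ {1,…,n−1}}. -/
/-!
Encode a vector `v` by its prefix sums `k ↦ v 0 + ⋯ + v (k - 1)`. As `ρ0` is nondecreasing its
prefix sums `X` are convex, and those of `S_C` interpolate `X` affinely between the cuts of `C`.
Every nondecreasing `v` whose prefix sums lie above `X`, with the same total, is a convex
combination of the `S_C`: let `C` glue together the indices where `prefixSum v` stays strictly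
above `X`; then `prefixSum v ≤ prefixSum S_C`, and `v = t • S_C + (1 - t) • v'` with `t` maximal
leaves `v'` in the same class, touching `X` at one more point. Averaging two adjacent entries of
the nondecreasing `S_A` keeps it nondecreasing and only raises one prefix sum, so
`B_{i,i+1}(S_A)` is in this class.
-/

open Finset

namespace BlockAveraging

variable {n : ℕ}

def zeroExt (v : Fin n → ℝ) (m : ℕ) : ℝ := if h : m < n then v ⟨m, h⟩ else 0

def prefixSum (v : Fin n → ℝ) (k : ℕ) : ℝ := ∑ m ∈ range k, zeroExt v m

lemma zeroExt_of_lt (v : Fin n → ℝ) {m : ℕ} (h : m < n) : zeroExt v m = v ⟨m, h⟩ := dif_pos h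

lemma zeroExt_smul_add_smul (a b : ℝ) (v w : Fin n → ℝ) (m : ℕ) :
    zeroExt (a • v + b • w) m = a * zeroExt v m + b * zeroExt w m := by
  unfold zeroExt; split_ifs <;> simp

lemma monotoneOn_zeroExt_iff {v : Fin n → ℝ} : MonotoneOn (zeroExt v) (Set.Iio n) ↔ Monotone v := by
  constructor
  · intro h a b hab
    simpa only [zeroExt_of_lt v a.2, zeroExt_of_lt v b.2] using h a.2 b.2 hab
  · intro h a ha b hb hab
    rw [zeroExt_of_lt v ha, zeroExt_of_lt v hb]
    exact h (Fin.mk_le_mk.2 hab)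

lemma monotone_of_zeroExt_le_succ {v : Fin n → ℝ}
    (h : ∀ m, m + 1 < n → zeroExt v m ≤ zeroExt v (m + 1)) : Monotone v :=
  monotoneOn_zeroExt_iff.1 <| monotoneOn_of_le_add_one Set.ordConnected_Iio
    fun m _ _ hm => h m hm

lemma prefixSum_succ (v : Fin n → ℝ) (k : ℕ) :
    prefixSum v (k + 1) = prefixSum v k + zeroExt v k := sum_range_succ _ _

lemma prefixSum_sub {v : Fin n → ℝ} {a b : ℕ} (h : a ≤ b) :
    prefixSum v b - prefixSum v a = ∑ m ∈ Ico a b, zeroExt v m :=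
  (sum_Ico_eq_sub _ h).symm

lemma prefixSum_of_le {v : Fin n → ℝ} {k : ℕ} (h : n ≤ k) : prefixSum v k = prefixSum v n := by
  rw [← sub_eq_zero, prefixSum_sub h]
  exact sum_eq_zero fun m hm => dif_neg (by rw [mem_Ico] at hm; omega)

lemma prefixSum_smul_add_smul (a b : ℝ) (v w : Fin n → ℝ) (k : ℕ) :
    prefixSum (a • v + b • w) k = a * prefixSum v k + b * prefixSum w k := by
  simp only [prefixSum, zeroExt_smul_add_smul, sum_add_distrib, mul_sum]

lemma eq_of_prefixSum_eq {v w : Fin n → ℝ} (h : ∀ k, prefixSum v k = prefixSum w k) : v = w := by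
  funext j
  have := h (j + 1)
  rwa [prefixSum_succ, prefixSum_succ, h j, add_right_inj, zeroExt_of_lt v j.2,
    zeroExt_of_lt w j.2] at this

lemma card_mul_sum_Ico_le {d : ℕ → ℝ} {a k b : ℕ} (hd : MonotoneOn d (Set.Ico a b))
    (hkb : k ≤ b) :
    ((b - a : ℕ) : ℝ) * ∑ m ∈ Ico a k, d m ≤ ((k - a : ℕ) : ℝ) * ∑ m ∈ Ico a b, d m := by
  set f : ℕ → ℝ := fun m => if m < k then 1 else 0
  have hfd : AntivaryOn f d (Ico a b : Finset ℕ) := by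
    intro i hi j hj hdij
    have hij : i < j := lt_of_not_ge fun hji =>
      (hd (coe_Ico a b ▸ hj) (coe_Ico a b ▸ hi) hji).not_gt hdij
    simp only [f]
    split_ifs <;> first | (exfalso; omega) | norm_num
  have hfilter : (Ico a b).filter (· < k) = Ico a k := by
    ext m; simp only [mem_filter, mem_Ico]; omega
  have key := hfd.card_mul_sum_le_sum_mul_sum
  simp only [f, ite_mul, one_mul, zero_mul, sum_ite, sum_const_zero, add_zero, sum_const,
    nsmul_eq_mul, mul_one, hfilter, Nat.card_Ico] at key
  exact key

lemma zeroExt_le_zeroExt_succ_of_touch {ρ0 u : Fin n → ℝ} (hρ0 : Monotone ρ0)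
    (hu : ∀ k, prefixSum ρ0 k ≤ prefixSum u k) {m : ℕ} (hm : m + 1 < n)
    (htouch : prefixSum u (m + 1) = prefixSum ρ0 (m + 1)) :
    zeroExt u m ≤ zeroExt u (m + 1) := by
  have hρ0m : zeroExt ρ0 m ≤ zeroExt ρ0 (m + 1) :=
    monotoneOn_zeroExt_iff.2 hρ0 (show m < n by omega) hm (Nat.le_succ m)
  have h1 := hu m
  have h2 := hu (m + 1 + 1)
  simp only [prefixSum_succ] at htouch h2 ⊢
  linarith

-- `k ≤ n` is a cut when it separates the (0-based) indices `k - 1` and `k` into different blocks.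
def IsCut (n : ℕ) (C : Finset ℕ) (k : ℕ) : Prop := k = 0 ∨ k = n ∨ k - 1 ∉ C

structure IsBlock (n : ℕ) (C : Finset ℕ) (a b : ℕ) : Prop where
  lt : a < b
  le : b ≤ n
  isCut_left : IsCut n C a
  isCut_right : IsCut n C b
  glued : ∀ m, a ≤ m → m + 1 < b → m ∈ C

lemma blockStart_eq {C : Finset ℕ} {a j : ℕ} (haj : a ≤ j) (hglued : ∀ m, a ≤ m → m < j → m ∈ C)
    (hcut : a = 0 ∨ a - 1 ∉ C) : blockStart C j = a := by
  rw [blockStart, Nat.findGreatest_eq_iff]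
  refine ⟨haj, fun ha => ⟨ha, hcut.resolve_left ha⟩, fun m ham hmj hm => ?_⟩
  exact hm.2 (hglued (m - 1) (by omega) (by omega))

lemma blockEnd_eq {C : Finset ℕ} {e j : ℕ} (hje : j ≤ e) (hen : e ≤ n - 1)
    (hglued : ∀ m, j ≤ m → m < e → m ∈ C) (hcut : e = n - 1 ∨ e ∉ C) :
    blockEnd n C j = e := by
  rw [blockEnd, Nat.findGreatest_eq_iff]
  refine ⟨hen, fun _ m hm => hglued m (mem_Ico.1 hm).1 (mem_Ico.1 hm).2,
    fun m hem hmn hm => ?_⟩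
  exact hcut.elim (fun he => by omega) fun he => he (hm e (mem_Ico.2 ⟨hje, hem⟩))

lemma exists_isBlock (C : Finset ℕ) {j : ℕ} (hj : j < n) :
    ∃ a b, IsBlock n C a b ∧ a ≤ j ∧ j < b := by
  obtain ⟨a, ha⟩ : ∃ a, blockStart C j = a := ⟨_, rfl⟩
  obtain ⟨e, he⟩ : ∃ e, blockEnd n C j = e := ⟨_, rfl⟩
  rw [blockStart, Nat.findGreatest_eq_iff] at ha
  rw [blockEnd, Nat.findGreatest_eq_iff] at he
  obtain ⟨haj, hcut_left, hmax_left⟩ := ha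
  obtain ⟨hen, hglued_right, hmax_right⟩ := he
  have hje : j ≤ e := by
    by_contra h
    exact @hmax_right j (by omega) (by omega) (by simp)
  refine ⟨a, e + 1, ⟨by omega, by omega, ?_, ?_, fun m ham hme => ?_⟩, haj, by omega⟩
  · by_cases ha0 : a = 0
    · exact Or.inl ha0
    · exact Or.inr (Or.inr (hcut_left ha0).2)
  · by_cases hen' : e = n - 1
    · exact Or.inr (Or.inl (by omega))
    · refine Or.inr (Or.inr fun heC => hmax_right (lt_add_one e) (by omega) fun m hm => ?_)
      obtain ⟨hjm, hme⟩ := mem_Ico.1 hm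
      rcases eq_or_lt_of_le (Nat.le_of_lt_succ hme) with rfl | hlt
      · simpa using heC
      · exact hglued_right (by omega) m (mem_Ico.2 ⟨hjm, hlt⟩)
  · rcases lt_or_ge m j with hmj | hjm
    · by_contra hm
      exact hmax_left (show a < m + 1 by omega) (by omega) ⟨by omega, by simpa using hm⟩
    · exact hglued_right (by omega) m (mem_Ico.2 ⟨hjm, by omega⟩)

section SA

variable {ρ0 : Fin n → ℝ} {C : Finset ℕ} {a b : ℕ}

lemma SA_eq_of_isBlock (hab : IsBlock n C a b) (j : Fin n) (haj : a ≤ j) (hjb : (j : ℕ) < b) :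
    SA ρ0 C j = (prefixSum ρ0 b - prefixSum ρ0 a) / ((b - a : ℕ) : ℝ) := by
  have hstart : blockStart C j = a := by
    refine blockStart_eq haj (fun m ham hmj => hab.glued m ham (by omega)) ?_
    rcases hab.isCut_left with h | h | h
    · exact Or.inl h
    · exact absurd h (by have := hab.lt; have := hab.le; omega)
    · exact Or.inr h
  have hend : blockEnd n C j = b - 1 := by
    refine blockEnd_eq (by omega) (by have := hab.le; omega)
      (fun m hjm hmb => hab.glued m (by omega) (by omega)) ?_
    rcases hab.isCut_right with h | h | h
    · exact absurd h (by have := hab.lt; omega)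
    · exact Or.inl (by omega)
    · exact Or.inr h
  have hIcc : Icc a (b - 1) = Ico a b := by
    ext m; simp only [mem_Icc, mem_Ico]; omega
  rw [SA, hstart, hend, hIcc, show b - 1 - a + 1 = b - a by omega, prefixSum_sub hab.lt.le]
  rfl

lemma prefixSum_SA_sub_of_isBlock (hab : IsBlock n C a b) {k : ℕ} (hak : a ≤ k) (hkb : k ≤ b) :
    prefixSum (SA ρ0 C) k - prefixSum (SA ρ0 C) a =
      ((k - a : ℕ) : ℝ) * ((prefixSum ρ0 b - prefixSum ρ0 a) / ((b - a : ℕ) : ℝ)) := by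
  have hconst : ∀ m ∈ Ico a k, zeroExt (SA ρ0 C) m =
      (prefixSum ρ0 b - prefixSum ρ0 a) / ((b - a : ℕ) : ℝ) := fun m hm => by
    obtain ⟨ham, hmk⟩ := mem_Ico.1 hm
    rw [zeroExt_of_lt _ (by have := hab.le; omega)]
    exact SA_eq_of_isBlock hab _ ham (by simp only; omega)
  rw [prefixSum_sub hak, sum_congr rfl hconst, sum_const, Nat.card_Ico, nsmul_eq_mul]

lemma prefixSum_SA_of_isCut {k : ℕ} (hk : IsCut n C k) :
    prefixSum (SA ρ0 C) k = prefixSum ρ0 k := by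
  induction k using Nat.strong_induction_on with
  | _ k ih =>
  rcases Nat.eq_zero_or_pos k with rfl | hk0
  · simp [prefixSum]
  rcases lt_or_ge n k with hnk | hkn
  · rw [prefixSum_of_le hnk.le, prefixSum_of_le hnk.le]
    exact ih n hnk (Or.inr (Or.inl rfl))
  obtain ⟨a, b, hab, hak, hkb⟩ := exists_isBlock C (show k - 1 < n by omega)
  have hbk : b = k := by
    by_contra hbk
    rcases hk with h | h | h
    · omega
    · have := hab.le; omega
    · exact h (hab.glued (k - 1) hak (by omega))
  subst hbk
  have hba : ((b - a : ℕ) : ℝ) ≠ 0 := Nat.cast_ne_zero.2 (by have := hab.lt; omega)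
  have := prefixSum_SA_sub_of_isBlock (ρ0 := ρ0) hab hab.lt.le le_rfl
  rw [mul_div_cancel₀ _ hba, ih a hab.lt hab.isCut_left] at this
  linarith

lemma SA_succ_eq_of_mem {m : ℕ} (hm : m ∈ C) (hmn : m + 1 < n) :
    SA ρ0 C ⟨m, by omega⟩ = SA ρ0 C ⟨m + 1, hmn⟩ := by
  obtain ⟨a, b, hab, ham, hmb⟩ := exists_isBlock C (show m < n by omega)
  have hmb' : m + 1 < b := by
    by_contra h
    rcases hab.isCut_right with h' | h' | h'
    · omega
    · omega
    · exact h' (by rwa [show b - 1 = m by omega])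
  rw [SA_eq_of_isBlock hab _ ham hmb, SA_eq_of_isBlock hab _ (by simp only; omega) hmb']

-- On a block `prefixSum (SA ρ0 C)` is affine, and it agrees with the convex `prefixSum v`
-- at both ends.
lemma prefixSum_le_prefixSum_SA {v : Fin n → ℝ} (hv : Monotone v)
    (hcut : ∀ k, IsCut n C k → prefixSum v k = prefixSum ρ0 k) (k : ℕ) :
    prefixSum v k ≤ prefixSum (SA ρ0 C) k := by
  rcases lt_or_ge k n with hkn | hnk
  swap
  · rw [prefixSum_of_le hnk, prefixSum_of_le hnk, hcut n (Or.inr (Or.inl rfl)),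
      prefixSum_SA_of_isCut (Or.inr (Or.inl rfl))]
  obtain ⟨a, b, hab, hak, hkb⟩ := exists_isBlock C hkn
  have hcheb := card_mul_sum_Ico_le (d := zeroExt v)
    ((monotoneOn_zeroExt_iff.2 hv).mono fun m hm => hm.2.trans_le hab.le)
    (a := a) hkb.le
  rw [← prefixSum_sub hak, ← prefixSum_sub hab.lt.le, hcut a hab.isCut_left,
    hcut b hab.isCut_right] at hcheb
  have hsub := prefixSum_SA_sub_of_isBlock (ρ0 := ρ0) hab hak hkb.le
  rw [prefixSum_SA_of_isCut hab.isCut_left] at hsub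
  have hba : (0 : ℝ) < ((b - a : ℕ) : ℝ) := Nat.cast_pos.2 (by have := hab.lt; omega)
  rw [mul_div_assoc', eq_div_iff hba.ne'] at hsub
  nlinarith

lemma prefixSum_le_prefixSum_SA_self (hρ0 : Monotone ρ0) (k : ℕ) :
    prefixSum ρ0 k ≤ prefixSum (SA ρ0 C) k :=
  prefixSum_le_prefixSum_SA hρ0 (fun _ _ => rfl) k

lemma monotone_of_touch_isCut (hρ0 : Monotone ρ0) {u : Fin n → ℝ}
    (hu : ∀ k, prefixSum ρ0 k ≤ prefixSum u k)
    (htouch : ∀ k, IsCut n C k → prefixSum u k = prefixSum ρ0 k)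
    (hglued : ∀ m ∈ C, m + 1 < n → zeroExt u m ≤ zeroExt u (m + 1)) : Monotone u := by
  refine monotone_of_zeroExt_le_succ fun m hmn => ?_
  by_cases hm : m ∈ C
  · exact hglued m hm hmn
  · exact zeroExt_le_zeroExt_succ_of_touch hρ0 hu hmn (htouch _ (Or.inr (Or.inr hm)))

lemma monotone_SA (hρ0 : Monotone ρ0) : Monotone (SA ρ0 C) :=
  monotone_of_touch_isCut hρ0 (prefixSum_le_prefixSum_SA_self hρ0)
    (fun _ hk => prefixSum_SA_of_isCut hk) fun m hm hmn => by
      rw [zeroExt_of_lt _ (by omega), zeroExt_of_lt _ hmn, SA_succ_eq_of_mem hm hmn]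

end SA

lemma exists_max_smul_le {S : Finset ℕ} {p q : ℕ → ℝ} (hp : ∀ k ∈ S, 0 < p k)
    (hpq : ∀ k ∈ S, p k ≤ q k) {k₀ : ℕ} (hk₀ : k₀ ∈ S) (hlt : p k₀ < q k₀) :
    ∃ t, 0 < t ∧ t < 1 ∧ (∀ k ∈ S, t * q k ≤ p k) ∧ ∃ k ∈ S, p k = t * q k := by
  have hq : ∀ k ∈ S, 0 < q k := fun k hk => (hp k hk).trans_le (hpq k hk)
  obtain ⟨k₁, hk₁, hmin⟩ := S.exists_min_image (fun k => p k / q k) ⟨k₀, hk₀⟩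
  refine ⟨p k₁ / q k₁, div_pos (hp k₁ hk₁) (hq k₁ hk₁), ?_, fun k hk => ?_, k₁, hk₁, ?_⟩
  · exact (hmin k₀ hk₀).trans_lt ((div_lt_one (hq k₀ hk₀)).2 hlt)
  · exact (le_div_iff₀ (hq k hk)).1 (hmin k hk)
  · rw [div_mul_cancel₀ _ (hq k₁ hk₁).ne']

noncomputable def slack (ρ0 v : Fin n → ℝ) : Finset ℕ :=
  (Ioo 0 n).filter fun k => prefixSum ρ0 k < prefixSum v k

def gluing (n : ℕ) (S : Finset ℕ) : Finset ℕ := (range (n - 1)).filter fun m => m + 1 ∈ S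

lemma isCut_gluing_iff {S : Finset ℕ} (hS : S ⊆ Ioo 0 n) {k : ℕ} :
    IsCut n (gluing n S) k ↔ k ∉ S := by
  have hS' : k ∈ S → 0 < k ∧ k < n := fun hk => by simpa using hS hk
  simp only [IsCut, gluing, mem_filter, mem_range, not_and]
  constructor
  · rintro (h | h | h) hk <;> have := hS' hk
    · omega
    · omega
    · exact h (by omega) (by rwa [Nat.sub_add_cancel this.1])
  · intro hk
    rcases Nat.eq_zero_or_pos k with h | h
    · exact Or.inl h
    · exact Or.inr (Or.inr fun _ hk' => hk (by rwa [Nat.sub_add_cancel h] at hk'))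

lemma prefixSum_eq_of_not_mem_slack {ρ0 v : Fin n → ℝ} (hge : ∀ k, prefixSum ρ0 k ≤ prefixSum v k)
    (htot : prefixSum v n = prefixSum ρ0 n) {k : ℕ} (hk : k ∉ slack ρ0 v) :
    prefixSum v k = prefixSum ρ0 k := by
  rcases Nat.eq_zero_or_pos k with rfl | hk0
  · simp [prefixSum]
  rcases lt_or_ge k n with hkn | hnk
  · simp only [slack, mem_filter, mem_Ioo, not_and, not_lt] at hk
    exact (hk ⟨hk0, hkn⟩).antisymm (hge k)
  · rw [prefixSum_of_le hnk, prefixSum_of_le hnk, htot]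

section peel

variable {ρ0 v w v' : Fin n → ℝ} {t : ℝ}

lemma prefixSum_eq_of_eq_smul_add_smul (ht1 : t < 1) (hdecomp : v = t • w + (1 - t) • v')
    {k : ℕ} (hv : prefixSum v k - prefixSum ρ0 k = t * (prefixSum w k - prefixSum ρ0 k)) :
    prefixSum v' k = prefixSum ρ0 k := by
  have h := prefixSum_smul_add_smul t (1 - t) w v' k
  rw [← hdecomp] at h
  nlinarith

lemma le_prefixSum_of_eq_smul_add_smul (ht1 : t < 1) (hdecomp : v = t • w + (1 - t) • v')
    {k : ℕ} (hv : t * (prefixSum w k - prefixSum ρ0 k) ≤ prefixSum v k - prefixSum ρ0 k) :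
    prefixSum ρ0 k ≤ prefixSum v' k := by
  have h := prefixSum_smul_add_smul t (1 - t) w v' k
  rw [← hdecomp] at h
  nlinarith

lemma zeroExt_le_succ_of_eq_smul_add_smul (ht1 : t < 1) (hdecomp : v = t • w + (1 - t) • v')
    {m : ℕ} (hv : zeroExt v m ≤ zeroExt v (m + 1)) (hw : zeroExt w m = zeroExt w (m + 1)) :
    zeroExt v' m ≤ zeroExt v' (m + 1) := by
  rw [hdecomp, zeroExt_smul_add_smul, zeroExt_smul_add_smul, hw] at hv
  nlinarith

end peel

lemma exists_eq_smul_add_smul_slack_ssubset {ρ0 v : Fin n → ℝ} (hρ0 : Monotone ρ0)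
    (hv : Monotone v) (hge : ∀ k, prefixSum ρ0 k ≤ prefixSum v k)
    (htot : prefixSum v n = prefixSum ρ0 n) (hvw : v ≠ SA ρ0 (gluing n (slack ρ0 v))) :
    ∃ (t : ℝ) (v' : Fin n → ℝ), 0 < t ∧ t < 1 ∧
      v = t • SA ρ0 (gluing n (slack ρ0 v)) + (1 - t) • v' ∧ Monotone v' ∧
      (∀ k, prefixSum ρ0 k ≤ prefixSum v' k) ∧ prefixSum v' n = prefixSum ρ0 n ∧
      slack ρ0 v' ⊂ slack ρ0 v := by
  set S := slack ρ0 v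
  have hS : S ⊆ Ioo 0 n := filter_subset _ _
  set w := SA ρ0 (gluing n S)
  have hv_pin : ∀ k ∉ S, prefixSum v k = prefixSum ρ0 k :=
    fun k hk => prefixSum_eq_of_not_mem_slack hge htot hk
  have hw_pin : ∀ k ∉ S, prefixSum w k = prefixSum ρ0 k :=
    fun k hk => prefixSum_SA_of_isCut ((isCut_gluing_iff hS).2 hk)
  have hvw_le : ∀ k, prefixSum v k ≤ prefixSum w k :=
    prefixSum_le_prefixSum_SA hv fun k hk => hv_pin k ((isCut_gluing_iff hS).1 hk)
  obtain ⟨k₀, hk₀⟩ := not_forall.1 (mt eq_of_prefixSum_eq hvw)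
  have hk₀S : k₀ ∈ S := by
    by_contra h
    exact hk₀ ((hv_pin k₀ h).trans (hw_pin k₀ h).symm)
  obtain ⟨t, ht0, ht1, ht_le, k₁, hk₁S, hk₁⟩ :=
    exists_max_smul_le (p := fun k => prefixSum v k - prefixSum ρ0 k)
      (q := fun k => prefixSum w k - prefixSum ρ0 k)
      (fun k hk => sub_pos.2 (mem_filter.1 hk).2) (fun k _ => by linarith [hvw_le k])
      hk₀S (by linarith [(hvw_le k₀).lt_of_ne hk₀])
  set v' := (1 - t)⁻¹ • (v - t • w)
  have hdecomp : v = t • w + (1 - t) • v' := by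
    simp only [v', smul_smul, mul_inv_cancel₀ (sub_ne_zero.2 ht1.ne'), one_smul]
    abel
  have hv'_pin : ∀ k ∉ S.erase k₁, prefixSum v' k = prefixSum ρ0 k := fun k hk => by
    refine prefixSum_eq_of_eq_smul_add_smul ht1 hdecomp ?_
    rcases eq_or_ne k k₁ with rfl | hne
    · exact hk₁
    · have hkS : k ∉ S := fun hkS => hk (mem_erase.2 ⟨hne, hkS⟩)
      rw [hv_pin k hkS, hw_pin k hkS]
      ring
  have hge' : ∀ k, prefixSum ρ0 k ≤ prefixSum v' k := fun k => by
    by_cases hk : k ∈ S.erase k₁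
    · exact le_prefixSum_of_eq_smul_add_smul ht1 hdecomp (ht_le k (mem_of_mem_erase hk))
    · exact (hv'_pin k hk).ge
  refine ⟨t, v', ht0, ht1, hdecomp, ?_, hge', hv'_pin n (by simp [S, slack]), ?_⟩
  · refine monotone_of_touch_isCut hρ0 hge'
      (fun k hk => hv'_pin k fun hk' => (isCut_gluing_iff hS).1 hk (mem_of_mem_erase hk'))
      fun m hm hmn => zeroExt_le_succ_of_eq_smul_add_smul ht1 hdecomp
        (monotoneOn_zeroExt_iff.2 hv (show m < n by omega) hmn (Nat.le_succ m)) ?_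
    rw [zeroExt_of_lt _ (by omega), zeroExt_of_lt _ hmn]
    exact SA_succ_eq_of_mem hm hmn
  · refine (show slack ρ0 v' ⊆ S.erase k₁ from fun k hk => ?_).trans_ssubset (erase_ssubset hk₁S)
    by_contra h
    exact (mem_filter.1 hk).2.ne' (hv'_pin k h)

theorem mem_convexHull_SA {ρ0 : Fin n → ℝ} (hρ0 : Monotone ρ0) {v : Fin n → ℝ} (hv : Monotone v)
    (hge : ∀ k, prefixSum ρ0 k ≤ prefixSum v k) (htot : prefixSum v n = prefixSum ρ0 n) :
    v ∈ convexHull ℝ {τ | ∃ C ⊆ range (n - 1), τ = SA ρ0 C} := by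
  obtain ⟨N, hN⟩ : ∃ N, #(slack ρ0 v) = N := ⟨_, rfl⟩
  induction N using Nat.strong_induction_on generalizing v with
  | _ N ih =>
  set w := SA ρ0 (gluing n (slack ρ0 v))
  have hw : w ∈ {τ | ∃ C ⊆ range (n - 1), τ = SA ρ0 C} := ⟨_, filter_subset _ _, rfl⟩
  by_cases hvw : v = w
  · exact hvw ▸ subset_convexHull ℝ _ hw
  obtain ⟨t, v', ht0, ht1, hdecomp, hv', hge', htot', hslack⟩ :=
    exists_eq_smul_add_smul_slack_ssubset hρ0 hv hge htot hvw
  rw [hdecomp]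
  exact convex_convexHull ℝ _ (subset_convexHull ℝ _ hw)
    (ih _ (hN ▸ card_lt_card hslack) hv' hge' htot' rfl) ht0.le (by linarith) (by ring)

section avg

variable {i : ℕ} (hi : i + 1 < n) (u : Fin n → ℝ)

lemma zeroExt_avg (m : ℕ) :
    zeroExt (avg ⟨i, by omega⟩ ⟨i + 1, hi⟩ u) m =
      if m = i ∨ m = i + 1 then (zeroExt u i + zeroExt u (i + 1)) / 2 else zeroExt u m := by
  rw [zeroExt_of_lt u (show i < n by omega), zeroExt_of_lt u hi]
  unfold zeroExt avg
  split_ifs <;> first | (exfalso; omega) | simp_all [Fin.ext_iff]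

lemma prefixSum_avg (k : ℕ) :
    prefixSum (avg ⟨i, by omega⟩ ⟨i + 1, hi⟩ u) k =
      prefixSum u k + if k = i + 1 then (zeroExt u (i + 1) - zeroExt u i) / 2 else 0 := by
  induction k with
  | zero => simp [prefixSum]
  | succ k ih =>
    rw [prefixSum_succ, prefixSum_succ, ih, zeroExt_avg]
    obtain hk | rfl | rfl | hk : k < i ∨ k = i ∨ k = i + 1 ∨ i + 1 < k := by omega
    all_goals simp (disch := omega) only [if_neg, true_or, or_true, ↓reduceIte]
    all_goals ring

variable {u} in
lemma monotone_avg (hu : Monotone u) : Monotone (avg ⟨i, by omega⟩ ⟨i + 1, hi⟩ u) := by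
  have hu' := monotoneOn_zeroExt_iff.2 hu
  have hle : ∀ {a b}, a ≤ b → b < n → zeroExt u a ≤ zeroExt u b := fun hab hb =>
    hu' (show _ < n by omega) hb hab
  refine monotone_of_zeroExt_le_succ fun m hmn => ?_
  rw [zeroExt_avg, zeroExt_avg]
  have hi_step := hle (Nat.le_succ i) hi
  split_ifs
  · exact le_rfl
  · obtain rfl : m = i + 1 := by omega
    linarith [hle (Nat.le_succ (i + 1)) hmn]
  · obtain rfl : i = m + 1 := by omega
    linarith [hle (Nat.le_succ m) hmn]
  · exact hle (Nat.le_succ m) hmn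

end avg

end BlockAveraging

open BlockAveraging

theorem avg_SA_mem_convexHull_SA_general (n : ℕ)
    (ρ0 : Fin n → ℝ) (hρ0 : Monotone ρ0)
    (A : Finset ℕ)
    (i : ℕ) (hi : i + 1 < n) :
    avg ⟨i, Nat.lt_of_succ_lt hi⟩ ⟨i + 1, hi⟩ (SA ρ0 A) ∈
      convexHull ℝ {τ | ∃ C ⊆ Finset.range (n - 1), τ = SA ρ0 C} := by
  have hSA : Monotone (SA ρ0 A) := monotone_SA hρ0
  have hstep : zeroExt (SA ρ0 A) i ≤ zeroExt (SA ρ0 A) (i + 1) :=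
    monotoneOn_zeroExt_iff.2 hSA (show i < n by omega) (show i + 1 < n from hi) (Nat.le_succ i)
  refine mem_convexHull_SA hρ0 (monotone_avg hi hSA) (fun k => ?_) ?_
  · rw [prefixSum_avg]
    split_ifs <;> linarith [prefixSum_le_prefixSum_SA_self (C := A) hρ0 k]
  · rw [prefixSum_avg, if_neg (by omega), add_zero,
      prefixSum_SA_of_isCut (Or.inr (Or.inl rfl))]

/-- For nondecreasing `ρ0`, every subset `A ⊆ {1, …, n-1}` and every adjacent pair
`(i, i+1)`, the vector `B_{i,i+1}(S_A)` lies in the convex hull of the finite set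
`{S_C : C ⊆ {1, …, n-1}}`. -/
theorem avg_SA_mem_convexHull_SA (n : ℕ) (hn : 1 ≤ n)
    (ρ0 : Fin n → ℝ) (hρ0 : Monotone ρ0)
    (A : Finset ℕ) (hA : A ⊆ Finset.range (n - 1))
    (i : ℕ) (hi : i + 1 < n) :
    avg ⟨i, Nat.lt_of_succ_lt hi⟩ ⟨i + 1, hi⟩ (SA ρ0 A) ∈
      convexHull ℝ {τ | ∃ C ⊆ Finset.range (n - 1), τ = SA ρ0 C} :=
  avg_SA_mem_convexHull_SA_general n ρ0 hρ0 A i hi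
end
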